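/- arXiv:1706.08469 — 3 statements merged into one kernel-verified Lean document; each statement's English description precedes it below -/
import Mathlib

section
/- For all nonnegative integers r and n, L_{3rn} * F_{3rn+3r} = L_{rn} * F_{rn+r} * (5 * F_{rn} * L_{rn+r} * F_{2rn+r} + L_{2r} + (-1)^r). -/
open Finset

def L : ℕ → ℤ
  | 0 => 2
  | 1 => 1
  | n + 2 => L (n + 1) + L n

def F (n : ℕ) : ℤ := Nat.fib n

lemma Fstep (n : ℕ) : F (n + 1 + 1) = F (n + 1) + F n := by
  unfold F
  rw [show n + 1 + 1 = n + 2 from rfl, Nat.fib_add_two]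
  push_cast
  ring

lemma Fadd1 (a b : ℕ) : F (a + b + 1) = F a * F b + F (a + 1) * F (b + 1) := by
  unfold F
  rw [Nat.fib_add]
  push_cast
  ring

lemma Fadd0 (a b : ℕ) :
    F (a + b) = F (a + 1) * F b + F a * F (b + 1) - F a * F b := by
  have h1 := Fadd1 a b
  have h2 := Fadd1 a (b + 1)
  have h3 := Fstep (a + b)
  have h4 := Fstep b
  have h5 : F (a + (b + 1) + 1) = F (a + b + 1 + 1) := by ring_nf
  linear_combination -h3 + h2 - h5 - h1 + F (a + 1) * h4

lemma L_eq (t : ℕ) : L t = 2 * F (t + 1) - F t := by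
  induction t using Nat.twoStepInduction with
  | zero => simp [L, F]
  | one => simp [L, F]
  | more t ih1 ih2 =>
    have hL : L (t + 2) = L (t + 1) + L t := by rw [L]
    rw [hL, ih1, ih2, show t + 2 + 1 = t + 1 + 1 + 1 from rfl, Fstep (t + 1),
      show t + 2 = t + 1 + 1 from rfl, Fstep t]
    ring

lemma cassini (k : ℕ) :
    F (k + 1) ^ 2 - F (k + 1) * F k - F k ^ 2 = (-1 : ℤ) ^ k := by
  induction k with
  | zero => simp [F]
  | succ k ih =>
    rw [show k + 1 + 1 = k + 1 + 1 from rfl, Fstep k]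
    linear_combination -ih

lemma aux (r m : ℕ) :
    L (m + m + m) * F ((m + r) + ((m + r) + (m + r))) =
      L m * F (m + r) *
        (5 * F m * L (m + r) * F ((m + m) + r) + L (r + r) + (-1 : ℤ) ^ r) := by
  have hm : (F (m + 1) ^ 2 - F (m + 1) * F m - F m ^ 2) ^ 2 = 1 := by
    rw [cassini m, ← pow_mul, mul_comm, pow_mul, neg_one_sq, one_pow]
  rw [← cassini r]
  simp only [L_eq]
  rw [Fadd0 (m + r) ((m + r) + (m + r)),
    Fadd0 (m + r) (m + r), Fadd1 (m + r) (m + r),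
    Fadd0 (m + m) m, Fadd1 (m + m) m,
    Fadd0 (m + m) r,
    Fadd0 m m, Fadd1 m m,
    Fadd0 m r, Fadd1 m r,
    Fadd0 r r, Fadd1 r r]
  linear_combination
    (6 * F (m+1)^2 * F r * F (r+1)^2 - 6 * F (m+1)^2 * F r^2 * F (r+1)
      + 4 * F (m+1)^2 * F r^3 + 6 * F m * F (m+1) * F (r+1)^3
      - 15 * F m * F (m+1) * F r * F (r+1)^2 + 13 * F m * F (m+1) * F r^2 * F (r+1)
      - 6 * F m * F (m+1) * F r^3 - 3 * F m^2 * F (r+1)^3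
      + 6 * F m^2 * F r * F (r+1)^2 - 5 * F m^2 * F r^2 * F (r+1)
      + 2 * F m^2 * F r^3) * hm

theorem stmt6 (r n : ℕ) :
    L (3 * r * n) * F (3 * r * n + 3 * r) =
      L (r * n) * F (r * n + r) *
        (5 * F (r * n) * L (r * n + r) * F (2 * r * n + r) + L (2 * r) + (-1 : ℤ) ^ r) := by
  rw [show 3 * r * n + 3 * r = (r * n + r) + ((r * n + r) + (r * n + r)) from by ring,
    show 3 * r * n = r * n + r * n + r * n from by ring,
    show 2 * r * n + r = (r * n + r * n) + r from by ring,
    show 2 * r = r + r from by ring]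
  exact aux r (r * n)
end

section
/- For all positive integers r and n with r even, 5 * F_{3r} * (∑_{k=1}^n F_{2rk}^3) = F_{rn} * F_{rn+r} * (L_{rn} * L_{rn+r} * L_{2rn+r} - 2*L_r^2). -/
open Finset
/-!
The right-hand side, read as a function `closedForm r m` of `m = r n`, telescopes: its increment
from `m` to `m + r` is the `n+1`-st summand. By Binet's formulas `√5 F_k = φ^k - ψ^k`,
`L_k = φ^k + ψ^k`, and since `φ^m ψ^m = φ^r ψ^r = 1` for even `m, r`, the increment identity
becomes a Laurent-polynomial identity in `φ^m` and `φ^r`.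
-/

open Real goldenRatio

lemma cube_telescoping {K : Type*} [Field K] {x y u v : K} (hxy : x * y = 1) (huv : u * v = 1) :
    (u ^ 3 - v ^ 3) * (x ^ 2 * u ^ 2 - y ^ 2 * v ^ 2) ^ 3 =
      (x * u - y * v) * (x * u ^ 2 - y * v ^ 2) *
          ((x * u + y * v) * (x * u ^ 2 + y * v ^ 2) * (x ^ 2 * u ^ 3 + y ^ 2 * v ^ 3) -
            2 * (u + v) ^ 2) -
        (x - y) * (x * u - y * v) *
          ((x + y) * (x * u + y * v) * (x ^ 2 * u + y ^ 2 * v) - 2 * (u + v) ^ 2) := by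
  obtain rfl := eq_inv_of_mul_eq_one_right hxy
  obtain rfl := eq_inv_of_mul_eq_one_right huv
  have hx : x ≠ 0 := left_ne_zero_of_mul_eq_one hxy
  have hu : u ≠ 0 := left_ne_zero_of_mul_eq_one huv
  field_simp
  ring

lemma L_add_two (n : ℕ) : L (n + 2) = L (n + 1) + L n := rfl

lemma coe_L_eq (n : ℕ) : (L n : ℝ) = φ ^ n + ψ ^ n := by
  induction n using Nat.twoStepInduction with
  | zero => norm_num [L]
  | one => simp [L, goldenRatio_add_goldenConj]
  | more n ih₀ ih₁ =>
    rw [L_add_two, Int.cast_add, ih₀, ih₁, pow_add φ n 2, pow_add ψ n 2, goldenRatio_sq,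
      goldenConj_sq]
    ring

lemma coe_F_eq (n : ℕ) : (F n : ℝ) = (φ ^ n - ψ ^ n) / √5 := by
  rw [F, Int.cast_natCast, coe_fib_eq]

lemma goldenRatio_pow_mul_goldenConj_pow {m : ℕ} (hm : Even m) : φ ^ m * ψ ^ m = 1 := by
  rw [← mul_pow, goldenRatio_mul_goldenConj, hm.neg_one_pow]

def closedForm (r m : ℕ) : ℤ :=
  F m * F (m + r) * (L m * L (m + r) * L (2 * m + r) - 2 * L r ^ 2)

lemma closedForm_add_sub {r m : ℕ} (hr : Even r) (hm : Even m) :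
    closedForm r (m + r) - closedForm r m = 5 * F (3 * r) * F (2 * (m + r)) ^ 3 := by
  have key := cube_telescoping (goldenRatio_pow_mul_goldenConj_pow hm)
    (goldenRatio_pow_mul_goldenConj_pow hr)
  have h5 : √5 ^ 2 = 5 := Real.sq_sqrt (by norm_num)
  suffices ((closedForm r (m + r) - closedForm r m : ℤ) : ℝ) =
      (5 * F (3 * r) * F (2 * (m + r)) ^ 3 : ℤ) by
    exact_mod_cast this
  simp only [closedForm, Int.cast_sub, Int.cast_mul, Int.cast_pow, Int.cast_ofNat, coe_F_eq,
    coe_L_eq]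
  simp only [pow_add, pow_mul', two_mul]
  field_simp
  rw [h5]
  linear_combination -5 * key

lemma five_mul_F_mul_sum_F_cube {r : ℕ} (hr : Even r) (n : ℕ) :
    5 * F (3 * r) * ∑ k ∈ Icc 1 n, F (2 * r * k) ^ 3 = closedForm r (r * n) := by
  induction n with
  | zero => simp [closedForm, F]
  | succ n ih =>
    rw [sum_Icc_succ_top (by omega), mul_add, ih, show 2 * r * (n + 1) = 2 * (r * n + r) by ring,
      ← closedForm_add_sub hr (hr.mul_right n), show r * (n + 1) = r * n + r by ring]
    ring

theorem stmt13_general (r n : ℕ) (hre : Even r) :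
    5 * F (3 * r) * ∑ k ∈ Finset.Icc 1 n, F (2 * r * k) ^ 3 =
      F (r * n) * F (r * n + r) * (L (r * n) * L (r * n + r) * L (2 * r * n + r) - 2 * L r ^ 2) := by
  rw [five_mul_F_mul_sum_F_cube hre, closedForm, ← mul_assoc]

theorem stmt13 (r n : ℕ) (hr : 0 < r) (hn : 0 < n) (hre : Even r) :
    5 * F (3 * r) * ∑ k ∈ Finset.Icc 1 n, F (2 * r * k) ^ 3 =
      F (r * n) * F (r * n + r) * (L (r * n) * L (r * n + r) * L (2 * r * n + r) - 2 * L r ^ 2) :=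
  stmt13_general r n hre
end

section
/- For every positive integer n, 8 * (∑_{k=1}^n L_{4k}^3) = F_{2n} * L_{2n+2} * (5 * L_{2n} * F_{2n+2} * F_{4n+2} + 32). -/
/-
Induction on `n`. By the Fibonacci recurrence and the doubling formulas, every term of the
inductive step is a polynomial in `a = F (2 * n)` and `b = F (2 * n + 1)`, and the step holds
modulo the even-index Cassini relation `b ^ 2 = a ^ 2 + a * b + 1`.
-/

open Finset

lemma F_add_two (m : ℕ) : F (m + 2) = F m + F (m + 1) := by
  simp [F, Nat.fib_add_two]

lemma L_eq_two_mul_F_succ_sub_F : ∀ m : ℕ, L m = 2 * F (m + 1) - F m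
  | 0 => by simp [L, F]
  | 1 => by simp [L, F]
  | m + 2 => by
    rw [L, L_eq_two_mul_F_succ_sub_F (m + 1), L_eq_two_mul_F_succ_sub_F m, F_add_two (m + 1),
      F_add_two m]
    ring

lemma F_two_mul (m : ℕ) : F (2 * m) = F m * (2 * F (m + 1) - F m) := by
  rw [F, ← Int.fib_natCast, Nat.cast_mul, Nat.cast_ofNat, Int.fib_two_mul, ← Nat.cast_succ]
  rfl

lemma F_two_mul_add_one (m : ℕ) : F (2 * m + 1) = F (m + 1) ^ 2 + F m ^ 2 := by
  simp [F, Nat.fib_two_mul_add_one]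

lemma F_succ_sq_sub_F_mul_F_add_two (m : ℕ) : F (m + 1) ^ 2 - F m * F (m + 2) = (-1) ^ m := by
  induction m with
  | zero => rfl
  | succ m ih =>
    rw [F_add_two (m + 1), F_add_two m] at *
    linear_combination (-1 : ℤ) * ih

lemma F_two_mul_add_one_sq (n : ℕ) :
    F (2 * n + 1) ^ 2 = F (2 * n) ^ 2 + F (2 * n) * F (2 * n + 1) + 1 := by
  have h := F_succ_sq_sub_F_mul_F_add_two (2 * n)
  rw [(even_two_mul n).neg_one_pow, F_add_two] at h
  linear_combination h

def cubeSumClosedForm (n : ℕ) : ℤ :=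
  F (2 * n) * L (2 * n + 2) * (5 * L (2 * n) * F (2 * n + 2) * F (4 * n + 2) + 32)

lemma cubeSumClosedForm_succ (n : ℕ) :
    cubeSumClosedForm (n + 1) = cubeSumClosedForm n + 8 * L (4 * (n + 1)) ^ 3 := by
  have h4n : F (4 * n) = F (2 * n) * (2 * F (2 * n + 1) - F (2 * n)) := by
    rw [show 4 * n = 2 * (2 * n) by ring, F_two_mul]
  have h4n1 : F (4 * n + 1) = F (2 * n + 1) ^ 2 + F (2 * n) ^ 2 := by
    rw [show 4 * n = 2 * (2 * n) by ring, F_two_mul_add_one]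
  simp only [cubeSumClosedForm, L_eq_two_mul_F_succ_sub_F, mul_add, mul_one, add_assoc,
    Nat.reduceAdd, F_add_two]
  rw [h4n, h4n1]
  set a := F (2 * n)
  set b := F (2 * n + 1)
  linear_combination (96 * a ^ 4 + 352 * a ^ 3 * b + 384 * a ^ 2 * b ^ 2 - 96 * a ^ 2
      - 32 * a * b ^ 3 - 256 * a * b - 224 * b ^ 4 - 224 * b ^ 2) * F_two_mul_add_one_sq n

theorem stmt19_general (n : ℕ) :
    8 * ∑ k ∈ Finset.Icc 1 n, L (4 * k) ^ 3 =
      F (2 * n) * L (2 * n + 2) * (5 * L (2 * n) * F (2 * n + 2) * F (4 * n + 2) + 32) := by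
  induction n with
  | zero => rfl
  | succ n ih =>
    rw [sum_Icc_succ_top (by omega), mul_add, ih]
    exact (cubeSumClosedForm_succ n).symm

theorem stmt19 (n : ℕ) (hn : 0 < n) :
    8 * ∑ k ∈ Finset.Icc 1 n, L (4 * k) ^ 3 =
      F (2 * n) * L (2 * n + 2) * (5 * L (2 * n) * F (2 * n + 2) * F (4 * n + 2) + 32) :=
  stmt19_general n
end
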